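/- Let S be an inverse semigroup satisfying xⁿ = xⁿ⁺¹ for some n ≥ 1, and define a ⊕ b := (a·b⁻¹)ⁿ·a. Then multiplication distributes over ⊕ on both sides: c·(a ⊕ b) = (c·a) ⊕ (c·b) and (a ⊕ b)·c = (a·c) ⊕ (b·c) for all a, b, c ∈ S. -/
import Mathlib


/-- `pw x n` is the power `xⁿ` in a semigroup, for `n ≥ 1`
(with junk value `pw x 0 = x`). -/
def pw {S : Type*} [Mul S] (x : S) : ℕ → S
  | 0 => x
  | 1 => x
  | n + 2 => pw x (n + 1) * x


section IS
variable {S : Type*} [Semigroup S] (inv : S → S)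

-- inv of an idempotent is itself
theorem inv_of_idem (huniq : ∀ x y : S, x * y * x = x → y * x * y = y → y = inv x)
    {e : S} (he : e * e = e) : inv e = e :=
  (huniq e e (by rw [he, he]) (by rw [he, he])).symm

theorem inv_invol (h1 : ∀ x : S, x * inv x * x = x) (h2 : ∀ x, inv x * x * inv x = inv x)
    (huniq : ∀ x y : S, x * y * x = x → y * x * y = y → y = inv x)
    (x : S) : inv (inv x) = x :=
  (huniq (inv x) x (h2 x) (h1 x)).symm

theorem mul_inv_idem (h1 : ∀ x : S, x * inv x * x = x) (x : S) :
    (x * inv x) * (x * inv x) = x * inv x := by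
  rw [← mul_assoc, h1]

theorem inv_mul_idem (h1 : ∀ x : S, x * inv x * x = x) (h2 : ∀ x, inv x * x * inv x = inv x)
    (x : S) : (inv x * x) * (inv x * x) = inv x * x := by
  rw [← mul_assoc, h2]

-- idempotents commute
theorem idem_comm (h1 : ∀ x : S, x * inv x * x = x) (h2 : ∀ x, inv x * x * inv x = inv x)
    (huniq : ∀ x y : S, x * y * x = x → y * x * y = y → y = inv x)
    {e f : S} (he : e * e = e) (hf : f * f = f) : e * f = f * e := by
  -- first: for any idempotents e f, e*f is idempotent
  have key : ∀ e f : S, e * e = e → f * f = f → (e * f) * (e * f) = e * f := by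
    intro e f he hf
    set a := inv (e * f) with ha
    have s1 : e * f * a * (e * f) = e * f := h1 (e * f)
    have s2 : a * (e * f) * a = a := h2 (e * f)
    -- g := f * a * e is an inverse of e * f
    have hginv : f * a * e = a := by
      apply huniq
      · -- (e*f) * (f*a*e) * (e*f) = e*f
        calc e * f * (f * a * e) * (e * f)
            = e * (f * f) * a * (e * e) * f := by simp only [mul_assoc]
          _ = e * f * a * (e * f) := by rw [he, hf]; simp only [mul_assoc]
          _ = e * f := s1
      · -- (f*a*e) * (e*f) * (f*a*e) = f*a*e
        calc f * a * e * (e * f) * (f * a * e)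
            = f * (a * ((e * e) * (f * f) * a)) * e := by simp only [mul_assoc]
          _ = f * (a * (e * f) * a) * e := by rw [he, hf]; simp only [mul_assoc]
          _ = f * a * e := by rw [s2]
    -- g is idempotent
    have hgidem : a * a = a := by
      rw [← hginv]
      calc f * a * e * (f * a * e)
          = f * (a * (e * f) * a) * e := by simp only [mul_assoc]
        _ = f * a * e := by rw [s2]
    -- so a is idempotent; then e*f = inv a = a
    have : e * f = inv a := huniq a (e * f) s2 s1
    rw [this, inv_of_idem inv huniq hgidem]
    exact hgidem
  have hef : (e * f) * (e * f) = e * f := key e f he hf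
  have hfe : (f * e) * (f * e) = f * e := key f e hf he
  -- f*e is the inverse of e*f, and e*f is its own inverse
  have i1 : e * f = inv (e * f) := by
    exact (inv_of_idem inv huniq hef).symm
  have i2 : f * e = inv (e * f) := by
    apply huniq
    · calc e * f * (f * e) * (e * f)
          = e * (f * f) * (e * e) * f := by simp only [mul_assoc]
        _ = (e * f) * (e * f) := by rw [he, hf]; simp only [mul_assoc]
        _ = e * f := hef
    · calc f * e * (e * f) * (f * e)
          = f * (e * e) * (f * f) * e := by simp only [mul_assoc]
        _ = (f * e) * (f * e) := by rw [he, hf]; simp only [mul_assoc]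
        _ = f * e := hfe
  rw [i1, ← i2]

theorem inv_antihom (h1 : ∀ x : S, x * inv x * x = x) (h2 : ∀ x, inv x * x * inv x = inv x)
    (huniq : ∀ x y : S, x * y * x = x → y * x * y = y → y = inv x)
    (x y : S) : inv (x * y) = inv y * inv x := by
  have hc := idem_comm inv h1 h2 huniq (inv_mul_idem inv h1 h2 x) (mul_inv_idem inv h1 y)
  -- hc : (inv x * x) * (y * inv y) = (y * inv y) * (inv x * x)
  refine (huniq (x * y) (inv y * inv x) ?_ ?_).symm
  · calc x * y * (inv y * inv x) * (x * y)
        = x * ((y * inv y) * (inv x * x)) * y := by simp only [mul_assoc]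
      _ = x * ((inv x * x) * (y * inv y)) * y := by rw [← hc]
      _ = (x * inv x * x) * (y * inv y * y) := by simp only [mul_assoc]
      _ = x * y := by rw [h1, h1]
  · calc inv y * inv x * (x * y) * (inv y * inv x)
        = inv y * ((inv x * x) * (y * inv y)) * inv x := by simp only [mul_assoc]
      _ = inv y * ((y * inv y) * (inv x * x)) * inv x := by rw [hc]
      _ = (inv y * y * inv y) * (inv x * x * inv x) := by simp only [mul_assoc]
      _ = inv y * inv x := by rw [h2, h2]

end IS

section PW
variable {S : Type*} [Semigroup S]

theorem pw_succ (x : S) (k : ℕ) : pw x (k + 2) = pw x (k + 1) * x := rfl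

theorem pw_one (x : S) : pw x 1 = x := rfl

theorem pw_add (x : S) (m : ℕ) : ∀ k, pw x (m + 1 + (k + 1)) = pw x (m + 1) * pw x (k + 1)
  | 0 => by rw [pw_one]; exact pw_succ x m
  | k + 1 => by
    have h : m + 1 + (k + 1 + 1) = (m + k + 1) + 2 := by omega
    have h2 : m + 1 + (k + 1) = (m + k + 1) + 1 := by omega
    rw [h, pw_succ, ← h2, pw_add x m k, pw_succ, mul_assoc]

theorem pw_swap (x y : S) : ∀ k, pw (x * y) (k + 1) * x = x * pw (y * x) (k + 1)
  | 0 => by rw [pw_one, pw_one, mul_assoc]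
  | k + 1 => by
    rw [pw_succ, pw_succ]
    calc pw (x * y) (k + 1) * (x * y) * x
        = pw (x * y) (k + 1) * x * (y * x) := by simp only [mul_assoc]
      _ = x * pw (y * x) (k + 1) * (y * x) := by rw [pw_swap x y k]
      _ = x * (pw (y * x) (k + 1) * (y * x)) := by rw [mul_assoc]

-- ends-with: if t * f = t then pw t (k+1) * f = pw t (k+1)
theorem pw_ends (t f : S) (h : t * f = t) : ∀ k, pw t (k + 1) * f = pw t (k + 1)
  | 0 => h
  | k + 1 => by rw [pw_succ, mul_assoc, h]

-- left absorb: if q * t = q then q * pw t (k+1) = q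
theorem pw_absorb_left (t q : S) (h : q * t = q) : ∀ k, q * pw t (k + 1) = q
  | 0 => h
  | k + 1 => by rw [pw_succ, ← mul_assoc, pw_absorb_left t q h k, h]

-- shift: f idempotent: f * pw (u * f) (k+1) = pw (f * u * f) (k+1)
theorem pw_shiftl (u f : S) (hf : f * f = f) :
    ∀ k, f * pw (u * f) (k + 1) = pw (f * u * f) (k + 1)
  | 0 => by rw [pw_one, pw_one, mul_assoc]
  | k + 1 => by
    have hend := pw_ends (f * u * f) f (by rw [mul_assoc, hf]) k
    rw [pw_succ, ← mul_assoc, pw_shiftl u f hf k, pw_succ]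
    calc pw (f * u * f) (k + 1) * (u * f)
        = (pw (f * u * f) (k + 1) * f) * (u * f) := by rw [hend]
      _ = pw (f * u * f) (k + 1) * (f * u * f) := by simp only [mul_assoc]

-- shift right: pw (g * v) (k+1) * g = pw (g * v * g) (k+1)
theorem pw_shiftr (v g : S) (hg : g * g = g) :
    ∀ k, pw (g * v) (k + 1) * g = pw (g * v * g) (k + 1)
  | 0 => by rw [pw_one, pw_one]
  | k + 1 => by
    have hend := pw_ends (g * v * g) g (by rw [mul_assoc, hg]) k
    rw [pw_succ, pw_succ]
    calc pw (g * v) (k + 1) * (g * v) * g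
        = pw (g * v) (k + 1) * g * (v * g) := by simp only [mul_assoc]
      _ = pw (g * v * g) (k + 1) * (v * g) := by rw [pw_shiftr v g hg k]
      _ = (pw (g * v * g) (k + 1) * g) * (v * g) := by rw [hend]
      _ = pw (g * v * g) (k + 1) * (g * v * g) := by simp only [mul_assoc]

end PW

section ISH
variable {S : Type*} [Semigroup S] (inv : S → S)
  (h1 : ∀ x : S, x * inv x * x = x) (h2 : ∀ x, inv x * x * inv x = inv x)
  (huniq : ∀ x y : S, x * y * x = x → y * x * y = y → y = inv x)

-- product of (commuting) idempotents is idempotent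
theorem idem_mul (hh1 : ∀ x : S, x * inv x * x = x) (hh2 : ∀ x, inv x * x * inv x = inv x)
    (hhuniq : ∀ x y : S, x * y * x = x → y * x * y = y → y = inv x)
    {p r : S} (hp : p * p = p) (hr : r * r = r) : (p * r) * (p * r) = p * r := by
  calc p * r * (p * r) = p * (r * p) * r := by simp only [mul_assoc]
    _ = p * (p * r) * r := by rw [idem_comm inv hh1 hh2 hhuniq hr hp]
    _ = (p * p) * (r * r) := by simp only [mul_assoc]
    _ = p * r := by rw [hp, hr]

theorem conj_idem {p : S} (u : S)
    (hh1 : ∀ x : S, x * inv x * x = x) (hh2 : ∀ x, inv x * x * inv x = inv x)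
    (hhuniq : ∀ x y : S, x * y * x = x → y * x * y = y → y = inv x)
    (hp : p * p = p) : (inv u * p * u) * (inv u * p * u) = inv u * p * u := by
  have hcm : p * (u * inv u) = (u * inv u) * p :=
    idem_comm inv hh1 hh2 hhuniq hp (mul_inv_idem inv hh1 u)
  calc inv u * p * u * (inv u * p * u)
      = inv u * (p * (u * inv u)) * (p * u) := by simp only [mul_assoc]
    _ = inv u * ((u * inv u) * p) * (p * u) := by rw [hcm]
    _ = (inv u * u * inv u) * (p * p * u) := by simp only [mul_assoc]
    _ = inv u * (p * u) := by rw [hh2, hp]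
    _ = inv u * p * u := by rw [mul_assoc]

theorem push_idem {p : S} (u : S)
    (hh1 : ∀ x : S, x * inv x * x = x) (hh2 : ∀ x, inv x * x * inv x = inv x)
    (hhuniq : ∀ x y : S, x * y * x = x → y * x * y = y → y = inv x)
    (hp : p * p = p) : p * u = u * (inv u * p * u) := by
  have hcm : p * (u * inv u) = (u * inv u) * p :=
    idem_comm inv hh1 hh2 hhuniq hp (mul_inv_idem inv hh1 u)
  calc p * u = p * (u * inv u * u) := by rw [hh1]
    _ = (p * (u * inv u)) * u := by simp only [mul_assoc]
    _ = ((u * inv u) * p) * u := by rw [hcm]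
    _ = u * (inv u * p * u) := by simp only [mul_assoc]

end ISH

section ISN
variable {S : Type*} [Semigroup S] (inv : S → S)
  (h1 : ∀ x : S, x * inv x * x = x) (h2 : ∀ x, inv x * x * inv x = inv x)
  (huniq : ∀ x y : S, x * y * x = x → y * x * y = y → y = inv x)
  (m : ℕ) (hid : ∀ x : S, pw x (m + 1) = pw x (m + 2))

include h1 h2 huniq hid

-- stability
omit h1 h2 huniq in
theorem pw_stab : ∀ (x : S) (k : ℕ), pw x (m + 1 + k) = pw x (m + 1) := by
  intro x k
  induction k with
  | zero => rfl
  | succ k ih =>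
    have h : m + 1 + (k + 1) = (m + k) + 2 := by omega
    have h' : m + 1 + k = m + k + 1 := by omega
    rw [h, pw_succ, ← h', ih, ← pw_succ, ← hid]

omit h1 h2 huniq in
theorem pw_idem (x : S) : pw x (m + 1) * pw x (m + 1) = pw x (m + 1) := by
  rw [← pw_add, pw_stab m hid]

omit h1 h2 huniq in
theorem pw_absorb (x : S) : pw x (m + 1) * x = pw x (m + 1) := by
  rw [← pw_succ, ← hid]

-- representation: pw (f*u*f) (k+1) = f * pw u (k+1) * q for some idempotent q
theorem pw_rep (u f : S) (hf : f * f = f) :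
    ∀ k, ∃ q : S, q * q = q ∧ pw (f * u * f) (k + 1) = f * pw u (k + 1) * q
  | 0 => ⟨f, hf, rfl⟩
  | k + 1 => by
    obtain ⟨q, hq, hrep⟩ := pw_rep u f hf k
    have hqf : (q * f) * (q * f) = q * f := idem_mul inv h1 h2 huniq hq hf
    have hpush : (q * f) * u = u * (inv u * (q * f) * u) := push_idem inv u h1 h2 huniq hqf
    have hconj : (inv u * (q * f) * u) * (inv u * (q * f) * u) = inv u * (q * f) * u :=
      conj_idem inv u h1 h2 huniq hqf
    refine ⟨(inv u * (q * f) * u) * f, idem_mul inv h1 h2 huniq hconj hf, ?_⟩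
    rw [pw_succ, hrep, pw_succ]
    calc f * pw u (k + 1) * q * (f * u * f)
        = f * pw u (k + 1) * ((q * f) * u) * f := by simp only [mul_assoc]
      _ = f * pw u (k + 1) * (u * (inv u * (q * f) * u)) * f := by rw [hpush]
      _ = f * (pw u (k + 1) * u) * ((inv u * (q * f) * u) * f) := by simp only [mul_assoc]
      _ = f * pw u (k + 2) * ((inv u * (q * f) * u) * f) := by rw [← pw_succ]

-- Lemma B
theorem lemB (u f : S) (hf : f * f = f) :
    pw (f * u * f) (m + 1) = f * pw u (m + 1) := by
  set t := f * u * f with ht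
  set e := pw u (m + 1) with he
  set e' := pw t (m + 1) with he'
  have heidem : e * e = e := pw_idem m hid u
  have he'idem : e' * e' = e' := pw_idem m hid t
  have hef : e * f = f * e := idem_comm inv h1 h2 huniq heidem hf
  obtain ⟨q, hq, hrep⟩ := pw_rep inv h1 h2 huniq m hid u f hf m
  have step1 : e' * f = e' := pw_ends t f (by rw [ht, mul_assoc, hf]) m
  have step2 : e' * e = e' := by
    rw [he', hrep, mul_assoc, idem_comm inv h1 h2 huniq hq heidem, ← mul_assoc,
      mul_assoc _ e e, heidem]
  have habs : (f * e) * t = f * e := by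
    calc (f * e) * t = f * ((e * f) * u) * f := by rw [ht]; simp only [mul_assoc]
      _ = f * ((f * e) * u) * f := by rw [hef]
      _ = (f * f) * (e * u) * f := by simp only [mul_assoc]
      _ = f * e * f := by rw [hf, he, pw_absorb m hid]
      _ = f * (e * f) := by rw [mul_assoc]
      _ = f * (f * e) := by rw [hef]
      _ = (f * f) * e := by rw [mul_assoc]
      _ = f * e := by rw [hf]
  have step3 : (f * e) * e' = f * e := pw_absorb_left t (f * e) habs m
  have hfeidem : (f * e) * (f * e) = f * e := idem_mul inv h1 h2 huniq hf heidem
  have hcomm : e' * (f * e) = (f * e) * e' := idem_comm inv h1 h2 huniq he'idem hfeidem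
  calc e' = e' * f * e := by rw [step1, step2]
    _ = e' * (f * e) := by rw [mul_assoc]
    _ = (f * e) * e' := hcomm
    _ = f * e := step3

end ISN

/-- In an inverse semigroup satisfying xⁿ = xⁿ⁺¹ (n ≥ 1), multiplication
distributes over a ⊕ b := (a * b⁻¹)ⁿ * a on both sides. -/
theorem stmt_10 {S : Type*} [Semigroup S] (inv : S → S)
    (h1 : ∀ x, x * inv x * x = x)
    (h2 : ∀ x, inv x * x * inv x = inv x)
    (huniq : ∀ x y, x * y * x = x → y * x * y = y → y = inv x)
    (n : ℕ) (hn : 1 ≤ n) (hid : ∀ x : S, pw x n = pw x (n + 1))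
    (a b c : S) :
    c * (pw (a * inv b) n * a) = pw (c * a * inv (c * b)) n * (c * a) ∧
    (pw (a * inv b) n * a) * c = pw (a * c * inv (b * c)) n * (a * c) := by
  obtain ⟨m, rfl⟩ : ∃ m, n = m + 1 := ⟨n - 1, by omega⟩
  have hid' : ∀ x : S, pw x (m + 1) = pw x (m + 2) := hid
  constructor
  · -- left distributivity
    have hf : (inv c * c) * (inv c * c) = inv c * c := inv_mul_idem inv h1 h2 c
    have hcf : c * (inv c * c) = c := by rw [← mul_assoc, h1]
    have harg : c * a * inv (c * b) = c * (a * (inv b * inv c)) := by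
      rw [inv_antihom inv h1 h2 huniq]; simp only [mul_assoc]
    have R1 : pw (c * (a * (inv b * inv c))) (m + 1) * (c * a)
        = c * (pw (a * inv b) (m + 1) * a) := by
      calc pw (c * (a * (inv b * inv c))) (m + 1) * (c * a)
          = (pw (c * (a * (inv b * inv c))) (m + 1) * c) * a := by simp only [mul_assoc]
        _ = (c * pw ((a * (inv b * inv c)) * c) (m + 1)) * a := by
            rw [pw_swap c (a * (inv b * inv c)) m]
        _ = (c * pw ((a * inv b) * (inv c * c)) (m + 1)) * a := by
            rw [show (a * (inv b * inv c)) * c = (a * inv b) * (inv c * c) by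
              simp only [mul_assoc]]
        _ = ((c * (inv c * c)) * pw ((a * inv b) * (inv c * c)) (m + 1)) * a := by rw [hcf]
        _ = (c * ((inv c * c) * pw ((a * inv b) * (inv c * c)) (m + 1))) * a := by
            simp only [mul_assoc]
        _ = (c * pw ((inv c * c) * (a * inv b) * (inv c * c)) (m + 1)) * a := by
            rw [pw_shiftl (a * inv b) (inv c * c) hf m]
        _ = (c * ((inv c * c) * pw (a * inv b) (m + 1))) * a := by
            rw [lemB inv h1 h2 huniq m hid' (a * inv b) (inv c * c) hf]
        _ = ((c * (inv c * c)) * pw (a * inv b) (m + 1)) * a := by simp only [mul_assoc]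
        _ = (c * pw (a * inv b) (m + 1)) * a := by rw [hcf]
        _ = c * (pw (a * inv b) (m + 1) * a) := by simp only [mul_assoc]
    rw [harg, R1]
  · -- right distributivity
    have hg : (c * inv c) * (c * inv c) = c * inv c := mul_inv_idem inv h1 c
    have hgc : (c * inv c) * c = c := h1 c
    have hev : pw (inv b * a) (m + 1) * pw (inv b * a) (m + 1) = pw (inv b * a) (m + 1) :=
      pw_idem m hid' (inv b * a)
    have harg2 : a * c * inv (b * c) = a * ((c * inv c) * inv b) := by
      rw [inv_antihom inv h1 h2 huniq]; simp only [mul_assoc]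
    have key : pw ((c * inv c) * (inv b * a)) (m + 1) * c
        = ((c * inv c) * pw (inv b * a) (m + 1)) * c := by
      calc pw ((c * inv c) * (inv b * a)) (m + 1) * c
          = pw ((c * inv c) * (inv b * a)) (m + 1) * ((c * inv c) * c) := by rw [hgc]
        _ = (pw ((c * inv c) * (inv b * a)) (m + 1) * (c * inv c)) * c := by
            simp only [mul_assoc]
        _ = pw ((c * inv c) * (inv b * a) * (c * inv c)) (m + 1) * c := by
            rw [pw_shiftr (inv b * a) (c * inv c) hg m]
        _ = ((c * inv c) * pw (inv b * a) (m + 1)) * c := by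
            rw [lemB inv h1 h2 huniq m hid' (inv b * a) (c * inv c) hg]
    have L : (pw (a * inv b) (m + 1) * a) * c = a * (pw (inv b * a) (m + 1) * c) := by
      rw [pw_swap a (inv b) m]; simp only [mul_assoc]
    have R : pw (a * ((c * inv c) * inv b)) (m + 1) * (a * c)
        = a * (pw (inv b * a) (m + 1) * c) := by
      calc pw (a * ((c * inv c) * inv b)) (m + 1) * (a * c)
          = (pw (a * ((c * inv c) * inv b)) (m + 1) * a) * c := by simp only [mul_assoc]
        _ = (a * pw (((c * inv c) * inv b) * a) (m + 1)) * c := by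
            rw [pw_swap a ((c * inv c) * inv b) m]
        _ = (a * pw ((c * inv c) * (inv b * a)) (m + 1)) * c := by
            rw [mul_assoc (c * inv c) (inv b) a]
        _ = a * (pw ((c * inv c) * (inv b * a)) (m + 1) * c) := by simp only [mul_assoc]
        _ = a * (((c * inv c) * pw (inv b * a) (m + 1)) * c) := by rw [key]
        _ = a * ((pw (inv b * a) (m + 1) * (c * inv c)) * c) := by
            rw [idem_comm inv h1 h2 huniq hg hev]
        _ = a * (pw (inv b * a) (m + 1) * ((c * inv c) * c)) := by simp only [mul_assoc]
        _ = a * (pw (inv b * a) (m + 1) * c) := by rw [hgc]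
    rw [harg2, R]
    exact L
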